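/- If every repeat in a string H has length strictly less than k (equivalently, no substring of length k occurs twice in H), then the sequence of k-mers along H visits each vertex of its De Bruijn graph exactly once; consequently the De Bruijn graph of H contains no directed cycle. -/

import Mathlib

/-- A directed graph (given by its edge relation) is acyclic. -/
def Acyclic {V : Type*} (E : V → V → Prop) : Prop :=
  ∀ (v : V) (l : List V), l ≠ [] → List.Chain' E (v :: l) → l.getLast? ≠ some v

/-!
Along a walk whose vertices are strictly ranked, no vertex repeats, so a closed walk is
impossible. In the De Bruijn graph of `H` every edge goes from the `i`-th `k`-mer to the
`(i+1)`-st, and when no `k`-mer repeats the position of a `k`-mer in `H` is well defined and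
serves as such a rank.
-/

def walkGraph {V : Type*} (f : ℕ → V) (N : ℕ) (u v : V) : Prop :=
  ∃ i, i + 1 ≤ N ∧ f i = u ∧ f (i + 1) = v

theorem acyclic_of_rank_lt {V α : Type*} [Preorder α] {E : V → V → Prop} (r : V → α)
    (hr : ∀ u v, E u v → r u < r v) : Acyclic E := by
  intro v l _ hchain hlast
  have hsorted : (v :: l).Pairwise (fun a b => r a < r b) :=
    List.isChain_iff_pairwise.mp (hchain.imp hr)
  have hnodup : (v :: l).Nodup := hsorted.imp fun h heq => (heq ▸ h).ne rfl
  exact List.nodup_cons.mp hnodup |>.1 (List.mem_of_getLast? hlast)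

theorem acyclic_walkGraph {V : Type*} {f : ℕ → V} {N : ℕ} (hf : Set.InjOn f (Set.Iic N)) :
    Acyclic (walkGraph f N) := by
  classical
  refine acyclic_of_rank_lt (Function.invFunOn f (Set.Iic N)) ?_
  rintro _ _ ⟨i, hi, rfl, rfl⟩
  rw [hf.leftInvOn_invFunOn (Set.mem_Iic.mpr (by omega)),
    hf.leftInvOn_invFunOn (Set.mem_Iic.mpr hi)]
  exact Nat.lt_succ_self i

theorem nodup_map_range_of_injOn {V : Type*} {f : ℕ → V} {N : ℕ}
    (hf : Set.InjOn f (Set.Iic N)) : ((List.range (N + 1)).map f).Nodup :=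
  List.nodup_range.map_on fun _ hi _ hj => hf (by simpa [Nat.lt_succ_iff] using hi)
    (by simpa [Nat.lt_succ_iff] using hj)

theorem stmt6_general {A : Type*} (H : List A) (k : ℕ)
    (kmer : ℕ → List A)
    (hinj : ∀ i ≤ H.length - k, ∀ j ≤ H.length - k, kmer i = kmer j → i = j)
    (Adj : List A → List A → Prop)
    (hAdj : ∀ u v, Adj u v ↔ ∃ i, i + 1 ≤ H.length - k ∧ kmer i = u ∧ kmer (i + 1) = v) :
    ((List.range (H.length - k + 1)).map kmer).Nodup ∧ Acyclic Adj := by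
  have hinjOn : Set.InjOn kmer (Set.Iic (H.length - k)) := fun i hi j hj => hinj i hi j hj
  have hAdj_eq : Adj = walkGraph kmer (H.length - k) := by
    ext u v
    exact hAdj u v
  exact ⟨nodup_map_range_of_injOn hinjOn, hAdj_eq ▸ acyclic_walkGraph hinjOn⟩

/-- if no length-`k` substring of `H` occurs twice (every repeat is
shorter than `k`), then the sequence of `k`-mers along `H` visits each vertex of
its De Bruijn graph exactly once (the `k`-mer list has no duplicates), and the
De Bruijn graph has no directed cycle. -/
theorem stmt6 {A : Type*} (H : List A) (k : ℕ) (hk : 0 < k) (hkH : k ≤ H.length)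
    (kmer : ℕ → List A) (hkmer : ∀ i, kmer i = (H.drop i).take k)
    (hinj : ∀ i ≤ H.length - k, ∀ j ≤ H.length - k, kmer i = kmer j → i = j)
    (Adj : List A → List A → Prop)
    (hAdj : ∀ u v, Adj u v ↔ ∃ i, i + 1 ≤ H.length - k ∧ kmer i = u ∧ kmer (i + 1) = v) :
    ((List.range (H.length - k + 1)).map kmer).Nodup ∧ Acyclic Adj :=
  stmt6_general H k kmer hinj Adj hAdj
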